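/- If (Q,Y) rejects (u,a), then there exists X ∈ [depth_Y(a), Y] such that (Q,Y) does not accept (u,b) for any b ∈ r_{|a|+1}([a,X]). -/

import Mathlib

/-!
Apply the pigeonhole principle (A.6) to the set of `b` accepted by `(Q,Y)`. If on the resulting
`X` every `r_{|a|+1}(B)`, `B ∈ [a,X]`, were accepted, then `(Q(u), X)` would accept `(u,a)`,
because each such `B` lies in `[r_{|a|+1}(B), Y]`. Since `[a,X] ≠ ∅` by (A.5) and `Q(u)` is
perfect, this contradicts rejection. `Q(u)` is perfect because a perfect set branches above each
node of its tree, so the canonical node `u(Q)` is a node of `T_Q`.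
-/

noncomputable section
open scoped Classical

/-- A perfect subset of Cantor space (perfect and nonempty). -/
def PerfectSet (C : Set (ℕ → Bool)) : Prop := Perfect C ∧ C.Nonempty

/-- `l` is a node of the tree `T_Q` of the set `Q ⊆ 2^ℕ`. -/
def InTree (Q : Set (ℕ → Bool)) (l : List Bool) : Prop :=
  ∃ x ∈ Q, ∀ i : Fin l.length, l.get i = x i

/-- `l` is a splitting (ramification) node of `T_Q`. -/
def SplitNode (Q : Set (ℕ → Bool)) (l : List Bool) : Prop :=
  InTree Q (l ++ [false]) ∧ InTree Q (l ++ [true])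

/-- The first splitting node of `T_Q` extending `t` (junk value `t` if none exists). -/
noncomputable def firstSplit (Q : Set (ℕ → Bool)) (t : List Bool) : List Bool :=
  if h : ∃ l, t <+: l ∧ SplitNode Q l ∧
      ∀ l', t <+: l' → SplitNode Q l' → l.length ≤ l'.length
  then h.choose else t

/-- Auxiliary: the canonical node `u(Q)`, with `u` given in reverse. -/
noncomputable def canonNodeRev (Q : Set (ℕ → Bool)) : List Bool → List Bool
  | [] => []
  | i :: u => firstSplit Q (canonNodeRev Q u) ++ [i]

/-- The canonical node `u(Q)` of the tree `T_Q`. -/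
noncomputable def canonNode (Q : Set (ℕ → Bool)) (u : List Bool) : List Bool :=
  canonNodeRev Q u.reverse

/-- The canonical piece `Q(u) = Q ∩ [u(Q)]`. -/
noncomputable def piece (Q : Set (ℕ → Bool)) (u : List Bool) : Set (ℕ → Bool) :=
  {x ∈ Q | ∀ i : Fin (canonNode Q u).length, (canonNode Q u).get i = x i}
noncomputable section
open scoped Classical

/-- An abstract Ramsey structure `(ℛ, 𝒮, ≤, ≤⁰, r, s)` with finitizations. -/
structure RamseyStructure where
  R : Type
  S : Type
  AR : Type
  AS : Type
  le : S → S → Prop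
  le0 : R → S → Prop
  r : R → ℕ → AR
  s : S → ℕ → AS
  lenR : AR → ℕ
  lenS : AS → ℕ
  lefin : AS → AS → Prop
  le0fin : AR → AS → Prop

namespace RamseyStructure

variable (σ : RamseyStructure)

def A1 : Prop := (∀ A B, σ.r A 0 = σ.r B 0) ∧ (∀ X Y, σ.s X 0 = σ.s Y 0)

def A2 : Prop := (∀ A B, A ≠ B → ∃ n, σ.r A n ≠ σ.r B n) ∧
  (∀ X Y, X ≠ Y → ∃ n, σ.s X n ≠ σ.s Y n)

def A3 : Prop :=
  (∀ A B n m, σ.r A n = σ.r B m → n = m ∧ ∀ k, k < n → σ.r A k = σ.r B k) ∧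
  (∀ X Y n m, σ.s X n = σ.s Y m → n = m ∧ ∀ k, k < n → σ.s X k = σ.s Y k)

/-- Approximations carry their length. -/
def lenOK : Prop := (∀ A n, σ.lenR (σ.r A n) = n) ∧ (∀ X n, σ.lenS (σ.s X n) = n)

/-- `a ⊑ b` : `b` end-extends `a` (in `𝒜ℛ`). -/
def endExtR (a b : σ.AR) : Prop :=
  ∀ B n, b = σ.r B n → ∃ m, m ≤ σ.lenR b ∧ a = σ.r B m

/-- `x ⊑ y` : `y` end-extends `x` (in `𝒜𝒮`). -/
def endExtS (x y : σ.AS) : Prop :=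
  ∀ Y n, y = σ.s Y n → ∃ m, m ≤ σ.lenS y ∧ x = σ.s Y m

/-- Axiom (A.4) (finitization). -/
def A4 : Prop :=
  (∀ x : σ.AS, {a : σ.AR | σ.le0fin a x}.Finite ∧ {y : σ.AS | σ.lefin y x}.Finite) ∧
  (∀ X Y, σ.le X Y ↔ ∀ n, ∃ m, σ.lefin (σ.s X n) (σ.s Y m)) ∧
  (∀ A X, σ.le0 A X ↔ ∀ n, ∃ m, σ.le0fin (σ.r A n) (σ.s X m)) ∧
  (∀ a x y, σ.le0fin a x → σ.lefin x y → σ.le0fin a y) ∧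
  (∀ a b x, σ.endExtR a b → σ.le0fin b x → ∃ y, σ.endExtS y x ∧ σ.le0fin a y)

/-- `depth_Y(a)`, an integer (`-1` if `a` fits in no approximation of `Y`). -/
noncomputable def depth (a : σ.AR) (Y : σ.S) : ℤ :=
  if ∃ k, σ.le0fin a (σ.s Y k) then (sInf {k | σ.le0fin a (σ.s Y k)} : ℕ) else -1

/-- The basic set `[a, Y] ⊆ ℛ`. -/
def basicR (a : σ.AR) (Y : σ.S) : Set σ.R := {A | σ.le0 A Y ∧ ∃ n, σ.r A n = a}

/-- The basic set `[x, Y] ⊆ 𝒮`. -/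
def basicSx (x : σ.AS) (Y : σ.S) : Set σ.S := {X | σ.le X Y ∧ ∃ n, σ.s X n = x}

/-- The basic set `[n, Y] = [s_n(Y), Y] ⊆ 𝒮`. -/
def basicSn (n : ℕ) (Y : σ.S) : Set σ.S := σ.basicSx (σ.s Y n) Y

/-- Axiom (A.5) (amalgamation). -/
def A5 : Prop := ∀ (a : σ.AR) (Y : σ.S),
  ((0:ℤ) ≤ σ.depth a Y → ∀ X ∈ σ.basicSn (σ.depth a Y).toNat Y, (σ.basicR a X).Nonempty) ∧
  (∀ X, σ.le X Y → (σ.basicR a X).Nonempty →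
    ∃ Y' ∈ σ.basicSn (σ.depth a Y).toNat Y, σ.basicR a Y' ⊆ σ.basicR a X)

/-- Axiom (A.6) (abstract pigeonhole principle). -/
def A6 : Prop := ∀ (a : σ.AR) (O : Set σ.AR) (Y : σ.S), (σ.basicR a Y).Nonempty →
  ∃ X ∈ σ.basicSn (σ.depth a Y).toNat Y,
    (∀ A ∈ σ.basicR a X, σ.r A (σ.lenR a + 1) ∈ O) ∨
    (∀ A ∈ σ.basicR a X, σ.r A (σ.lenR a + 1) ∉ O)

/-- All the axioms (A.1)–(A.6) together with coherence of lengths. -/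
def AxiomsAll : Prop := σ.A1 ∧ σ.A2 ∧ σ.A3 ∧ σ.lenOK ∧ σ.A4 ∧ σ.A5 ∧ σ.A6

/-- `𝒮` is closed in `𝒜𝒮^ℕ` (product of discrete topologies), via `X ↦ (s_n(X))_n`. -/
def SClosed : Prop :=
  letI : TopologicalSpace σ.AS := ⊥
  IsClosed {f : ℕ → σ.AS | ∃ X : σ.S, ∀ n, σ.s X n = f n}

/-- `𝒜ℛ[X] = {b : [b,X] ≠ ∅}`. -/
def ARof (X : σ.S) : Set σ.AR := {b | (σ.basicR b X).Nonempty}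

end RamseyStructure

/-- `x|k`, the length-`k` initial segment of `x ∈ 2^ℕ`. -/
def restrict (x : ℕ → Bool) (k : ℕ) : List Bool := List.ofFn fun i : Fin k => x i

/-- Combinatorial forcing: `(Q,Y)` accepts `(u,a)` (relative to `ℱ`). -/
def accepts (σ : RamseyStructure) (F : Set (List Bool × σ.AR)) (Q : Set (ℕ → Bool))
    (Y : σ.S) (u : List Bool) (a : σ.AR) : Prop :=
  ∀ x ∈ piece Q u, ∀ B ∈ σ.basicR a Y, ∃ k m : ℕ, (restrict x k, σ.r B m) ∈ F

/-- `(Q,Y)` rejects `(u,a)`: no `(M,X)` with `M` perfect `⊆ Q(u)`, `X ≤ Y`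
compatible with `a`, accepts `(u,a)`. -/
def rejects (σ : RamseyStructure) (F : Set (List Bool × σ.AR)) (Q : Set (ℕ → Bool))
    (Y : σ.S) (u : List Bool) (a : σ.AR) : Prop :=
  ∀ M : Set (ℕ → Bool), PerfectSet M → M ⊆ piece Q u →
    ∀ X : σ.S, σ.le X Y → (σ.basicR a X).Nonempty → ¬ accepts σ F M X u a

/-- `(Q,Y)` decides `(u,a)`: it accepts or rejects it. -/
def decides (σ : RamseyStructure) (F : Set (List Bool × σ.AR)) (Q : Set (ℕ → Bool))
    (Y : σ.S) (u : List Bool) (a : σ.AR) : Prop :=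
  accepts σ F Q Y u a ∨ rejects σ F Q Y u a

def cyl (l : List Bool) : Set (ℕ → Bool) := {x | ∀ i : Fin l.length, l.get i = x i}

lemma isClopen_cyl (l : List Bool) : IsClopen (cyl l) := by
  have : cyl l = ⋂ i : Fin l.length, (fun x : ℕ → Bool => x i) ⁻¹' {l.get i} := by
    ext x; simp [cyl, eq_comm, Set.mem_iInter]
  rw [this]
  exact isClopen_iInter_of_finite fun i => (isClopen_discrete _).preimage (continuous_apply _)

lemma length_restrict (x : ℕ → Bool) (k : ℕ) : (restrict x k).length = k :=
  List.length_ofFn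

lemma mem_cyl_iff_restrict_eq {x : ℕ → Bool} {l : List Bool} :
    x ∈ cyl l ↔ restrict x l.length = l := by
  constructor
  · intro h
    refine List.ext_getElem (length_restrict x _) fun i hi hi' => ?_
    simpa [restrict] using (h ⟨i, hi'⟩).symm
  · rintro h ⟨i, hi⟩
    rw [← List.getElem_ofFn (f := fun j : Fin l.length => x j) (by simpa using hi)]
    simp only [List.get_eq_getElem, restrict] at h ⊢
    simp [h]

lemma restrict_prefix (x : ℕ → Bool) {n m : ℕ} (h : n ≤ m) :
    restrict x n <+: restrict x m := by
  obtain ⟨d, rfl⟩ := Nat.exists_eq_add_of_le h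
  unfold restrict
  rw [List.ofFn_add (f := fun i : Fin (n + d) => x i)]
  exact List.prefix_append _ _

lemma restrict_succ (x : ℕ → Bool) (m : ℕ) : restrict x (m + 1) = restrict x m ++ [x m] :=
  List.ofFn_succ_last

lemma inTree_restrict {Q : Set (ℕ → Bool)} {x : ℕ → Bool} (hx : x ∈ Q) (k : ℕ) :
    InTree Q (restrict x k) :=
  ⟨x, hx, mem_cyl_iff_restrict_eq.mpr (by rw [length_restrict])⟩

lemma splitNode_restrict {Q : Set (ℕ → Bool)} {x y : ℕ → Bool} (hx : x ∈ Q) (hy : y ∈ Q)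
    {m : ℕ} (hagree : ∀ i < m, x i = y i) (hne : x m ≠ y m) : SplitNode Q (restrict x m) := by
  have hxy : restrict y m = restrict x m :=
    List.ofFn_inj.mpr (funext fun i => (hagree i i.isLt).symm)
  have hxm : InTree Q (restrict x m ++ [x m]) := restrict_succ x m ▸ inTree_restrict hx (m + 1)
  have hym : InTree Q (restrict x m ++ [y m]) :=
    hxy ▸ restrict_succ y m ▸ inTree_restrict hy (m + 1)
  rw [Bool.eq_not_of_ne hne] at hxm
  cases hyb : y m <;> simp only [hyb, Bool.not_false, Bool.not_true] at hxm hym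
  exacts [⟨hym, hxm⟩, ⟨hxm, hym⟩]

lemma Perfect.exists_splitNode {Q : Set (ℕ → Bool)} (hQ : Perfect Q) {t : List Bool}
    (ht : InTree Q t) : ∃ l, t <+: l ∧ SplitNode Q l := by
  obtain ⟨x, hxQ, hxt⟩ := ht
  obtain ⟨y, ⟨hyt, hyQ⟩, hyx⟩ :=
    accPt_iff_nhds.mp (hQ.acc x hxQ) (cyl t) ((isClopen_cyl t).isOpen.mem_nhds hxt)
  have hagree_t : ∀ i < t.length, x i = y i := fun i hi =>
    (hxt ⟨i, hi⟩).symm.trans (hyt ⟨i, hi⟩)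
  have hex : ∃ m, x m ≠ y m := by
    by_contra! h
    exact hyx (funext h).symm
  refine ⟨restrict x (Nat.find hex), ?_, splitNode_restrict hxQ hyQ
    (fun i hi => not_not.mp (Nat.find_min hex hi)) (Nat.find_spec hex)⟩
  have hlen : t.length ≤ Nat.find hex :=
    (Nat.le_find_iff hex _).mpr fun i hi => not_not.mpr (hagree_t i hi)
  exact mem_cyl_iff_restrict_eq.mp hxt ▸ restrict_prefix x hlen

lemma Perfect.splitNode_firstSplit {Q : Set (ℕ → Bool)} (hQ : Perfect Q) {t : List Bool}
    (ht : InTree Q t) : SplitNode Q (firstSplit Q t) := by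
  have hex : ∃ k, ∃ l : List Bool, l.length = k ∧ t <+: l ∧ SplitNode Q l := by
    obtain ⟨l, hpre, hsplit⟩ := hQ.exists_splitNode ht
    exact ⟨_, l, rfl, hpre, hsplit⟩
  obtain ⟨l, hlen, hpre, hsplit⟩ := Nat.find_spec hex
  have hmin : ∃ l, t <+: l ∧ SplitNode Q l ∧
      ∀ l', t <+: l' → SplitNode Q l' → l.length ≤ l'.length :=
    ⟨l, hpre, hsplit, fun l' hpre' hsplit' =>
      hlen ▸ Nat.find_min' hex ⟨l', rfl, hpre', hsplit'⟩⟩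
  rw [firstSplit, dif_pos hmin]
  exact hmin.choose_spec.2.1

lemma PerfectSet.inTree_canonNodeRev {Q : Set (ℕ → Bool)} (hQ : PerfectSet Q) (v : List Bool) :
    InTree Q (canonNodeRev Q v) := by
  induction v with
  | nil =>
    obtain ⟨x, hx⟩ := hQ.2
    exact ⟨x, hx, fun i => absurd i.isLt (by simp [canonNodeRev])⟩
  | cons i u ih =>
    have hsplit := hQ.1.splitNode_firstSplit ih
    cases i
    exacts [hsplit.1, hsplit.2]

lemma PerfectSet.piece {Q : Set (ℕ → Bool)} (hQ : PerfectSet Q) (u : List Bool) :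
    PerfectSet (_root_.piece Q u) := by
  have hpiece : _root_.piece Q u = Q ∩ cyl (canonNode Q u) := rfl
  refine ⟨⟨?_, ?_⟩, hQ.inTree_canonNodeRev u.reverse⟩ <;> rw [hpiece]
  · exact hQ.1.closed.inter (isClopen_cyl _).isClosed
  · exact Set.inter_comm _ _ ▸ hQ.1.acc.open_inter (isClopen_cyl _).isOpen

namespace RamseyStructure

variable {σ : RamseyStructure}

lemma le0_trans (h4 : σ.A4) {A : σ.R} {X Y : σ.S} (hA : σ.le0 A X) (hXY : σ.le X Y) :
    σ.le0 A Y := by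
  rw [h4.2.2.1] at hA ⊢
  intro n
  obtain ⟨m, hm⟩ := hA n
  obtain ⟨k, hk⟩ := (h4.2.1 X Y).mp hXY m
  exact ⟨k, h4.2.2.2.1 _ _ _ hm hk⟩

lemma mem_basicR_r (h4 : σ.A4) {a : σ.AR} {X Y : σ.S} {B : σ.R} (hB : B ∈ σ.basicR a X)
    (hXY : σ.le X Y) (n : ℕ) : B ∈ σ.basicR (σ.r B n) Y :=
  ⟨le0_trans h4 hB.1 hXY, n, rfl⟩

lemma depth_nonneg (h4 : σ.A4) {a : σ.AR} {Y : σ.S} (haY : (σ.basicR a Y).Nonempty) :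
    0 ≤ σ.depth a Y := by
  obtain ⟨A, hAY, n, rfl⟩ := haY
  obtain ⟨m, hm⟩ := (h4.2.2.1 A Y).mp hAY n
  rw [depth, if_pos ⟨m, hm⟩]
  exact Int.natCast_nonneg _

lemma basicR_nonempty_of_mem_basicSn (h4 : σ.A4) (h5 : σ.A5) {a : σ.AR} {X Y : σ.S}
    (haY : (σ.basicR a Y).Nonempty) (hX : X ∈ σ.basicSn (σ.depth a Y).toNat Y) :
    (σ.basicR a X).Nonempty :=
  (h5 a Y).1 (depth_nonneg h4 haY) X hX

end RamseyStructure

open RamseyStructure in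
lemma accepts_piece_of_accepts_r {σ : RamseyStructure} (h4 : σ.A4)
    {F : Set (List Bool × σ.AR)} {Q : Set (ℕ → Bool)} {X Y : σ.S} (hXY : σ.le X Y)
    {u : List Bool} {a : σ.AR} {n : ℕ}
    (hacc : ∀ B ∈ σ.basicR a X, accepts σ F Q Y u (σ.r B n)) :
    accepts σ F (piece Q u) X u a := fun x hx B hB =>
  hacc B hB x hx.1 B (mem_basicR_r h4 hB hXY n)

/-- If `(Q,Y)` rejects `(u,a)`, there is `X ∈ [depth_Y(a), Y]` such that `(Q,Y)`
does not accept `(u,b)` for any `b ∈ r_{|a|+1}([a,X])`. -/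
theorem stmt8 (σ : RamseyStructure) (hax : σ.AxiomsAll)
    (F : Set (List Bool × σ.AR)) (Q : Set (ℕ → Bool)) (hQ : PerfectSet Q)
    (Y : σ.S) (u : List Bool) (a : σ.AR) (haY : (σ.basicR a Y).Nonempty)
    (hrej : rejects σ F Q Y u a) :
    ∃ X ∈ σ.basicSn (σ.depth a Y).toNat Y,
      ∀ b : σ.AR, (∃ B ∈ σ.basicR a X, b = σ.r B (σ.lenR a + 1)) →
        ¬ accepts σ F Q Y u b := by
  obtain ⟨-, -, -, -, h4, h5, h6⟩ := hax
  obtain ⟨X, hX, hsplit⟩ := h6 a {b | accepts σ F Q Y u b} Y haY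
  refine ⟨X, hX, ?_⟩
  rcases hsplit with hall | hnone
  · exact absurd (accepts_piece_of_accepts_r h4 hX.1 hall)
      (hrej _ (hQ.piece u) subset_rfl X hX.1
        (RamseyStructure.basicR_nonempty_of_mem_basicSn h4 h5 haY hX))
  · rintro b ⟨B, hB, rfl⟩
    exact hnone B hB
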